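/- arXiv:1308.6772 — 2 statements merged into one kernel-verified Lean document; each statement's English description precedes it below -/
import Mathlib

section
/- For n ≥ 0, Q̃_n · conj(Q̃_n) = 3(F_{2n+3} + 2ε F_{2n+4}) as a scalar dual number inside the dual quaternions. -/
open Quaternion TrivSqZeroExt DualNumber

noncomputable section

/-- The n-th Fibonacci quaternion Q_n = F_n + i F_{n+1} + j F_{n+2} + k F_{n+3}. -/
def fibQ (n : ℕ) : ℍ[ℝ] :=
  ⟨Nat.fib n, Nat.fib (n+1), Nat.fib (n+2), Nat.fib (n+3)⟩

/-- Lucas numbers: L_0 = 2, L_1 = 1. -/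
def lucas : ℕ → ℕ
  | 0 => 2
  | 1 => 1
  | n + 2 => lucas n + lucas (n+1)

/-- The n-th Lucas quaternion K_n = L_n + i L_{n+1} + j L_{n+2} + k L_{n+3}. -/
def lucasQ (n : ℕ) : ℍ[ℝ] :=
  ⟨lucas n, lucas (n+1), lucas (n+2), lucas (n+3)⟩

/-- The n-th dual Fibonacci quaternion Q̃_n = Q_n + ε Q_{n+1}. -/
def dQ (n : ℕ) : DualNumber ℍ[ℝ] := inl (fibQ n) + inl (fibQ (n+1)) * ε

/-- The n-th dual Lucas quaternion K̃_n = K_n + ε K_{n+1}. -/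
def dK (n : ℕ) : DualNumber ℍ[ℝ] := inl (lucasQ n) + inl (lucasQ (n+1)) * ε

/-- Conjugate of the dual Fibonacci quaternion (componentwise quaternion conjugation). -/
def dQconj (n : ℕ) : DualNumber ℍ[ℝ] := inl (star (fibQ n)) + inl (star (fibQ (n+1))) * ε

/-- The dual Fibonacci number F̃_n = F_n + ε F_{n+1} as a scalar dual quaternion. -/
def dF (n : ℕ) : DualNumber ℍ[ℝ] :=
  inl ((Nat.fib n : ℝ) : ℍ[ℝ]) + inl ((Nat.fib (n+1) : ℝ) : ℍ[ℝ]) * ε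

/-- The dual Lucas number L̃_n = L_n + ε L_{n+1} as a scalar dual quaternion. -/
def dL (n : ℕ) : DualNumber ℍ[ℝ] :=
  inl ((lucas n : ℝ) : ℍ[ℝ]) + inl ((lucas (n+1) : ℝ) : ℍ[ℝ]) * ε

def qi : ℍ[ℝ] := ⟨0,1,0,0⟩
def qj : ℍ[ℝ] := ⟨0,0,1,0⟩
def qk : ℍ[ℝ] := ⟨0,0,0,1⟩

/-!
The dual product splits as `Q_n Q̄_n + ε (Q_n Q̄_{n+1} + Q_{n+1} Q̄_n)`. The real part is `|Q_n|²`
and the dual part is twice the dot product of the coefficient vectors of `Q_n` and `Q_{n+1}`, so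
both are sums of four products of consecutive Fibonacci numbers. Writing everything in terms of
`F_{n+1}, F_{n+2}`, these sums are `3 (F_{n+1}² + F_{n+2}²) = 3 F_{2n+3}` and
`3 F_{n+2} (2 F_{n+1} + F_{n+2}) = 3 F_{2n+4}` by the doubling formulas.
-/

theorem DualNumber.inl_add_inl_mul_eps_mul {R : Type*} [Semiring R] (a b c d : R) :
    (inl a + inl b * ε) * (inl c + inl d * ε : DualNumber R) =
      inl (a * c) + inl (a * d + b * c) * ε := by
  ext <;> simp

theorem Quaternion.mul_star_add_mul_star {R : Type*} [CommRing R] (p q : ℍ[R]) :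
    p * star q + q * star p =
      ((2 * (p.re * q.re + p.imI * q.imI + p.imJ * q.imJ + p.imK * q.imK) : R) : ℍ[R]) := by
  rw [← star_star (q * star p), star_mul, star_star, self_add_star', re_mul]
  simp only [re_star, imI_star, imJ_star, imK_star]
  ring_nf

theorem Nat.sum_fib_sq_four_consecutive (n : ℕ) :
    fib n ^ 2 + fib (n + 1) ^ 2 + fib (n + 2) ^ 2 + fib (n + 3) ^ 2 = 3 * fib (2 * n + 3) := by
  rw [show 2 * n + 3 = 2 * (n + 1) + 1 by ring, fib_two_mul_add_one]
  simp only [fib_add_two]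
  ring

theorem Nat.sum_fib_mul_fib_succ_four_consecutive (n : ℕ) :
    fib n * fib (n + 1) + fib (n + 1) * fib (n + 2) + fib (n + 2) * fib (n + 3) +
      fib (n + 3) * fib (n + 4) = 3 * fib (2 * n + 4) := by
  rw [show 2 * n + 4 = 2 * (n + 1) + 2 by ring, fib_two_mul_add_two]
  simp only [fib_add_two]
  ring

theorem normSq_fibQ (n : ℕ) : normSq (fibQ n) = 3 * Nat.fib (2 * n + 3) := by
  rw [normSq_def']
  dsimp only [fibQ]
  exact_mod_cast Nat.sum_fib_sq_four_consecutive n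

theorem fibQ_mul_star_fibQ_succ_add (n : ℕ) :
    fibQ n * star (fibQ (n + 1)) + fibQ (n + 1) * star (fibQ n) =
      ((6 * Nat.fib (2 * n + 4) : ℝ) : ℍ[ℝ]) := by
  rw [mul_star_add_mul_star, show (6 : ℝ) = 2 * 3 by norm_num, mul_assoc]
  dsimp only [fibQ]
  exact_mod_cast congrArg (fun m : ℕ => ((2 * m : ℕ) : ℍ[ℝ]))
    (Nat.sum_fib_mul_fib_succ_four_consecutive n)

theorem dual_fib_quaternion_norm_eq (n : ℕ) :
    dQ n * dQconj n =
      (3 : ℝ) • (inl ((Nat.fib (2*n+3) : ℝ) : ℍ[ℝ]) +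
        inl ((2 * (Nat.fib (2*n+4) : ℝ) : ℍ[ℝ])) * ε) := by
  rw [dQ, dQconj, DualNumber.inl_add_inl_mul_eps_mul, self_mul_star, normSq_fibQ,
    fibQ_mul_star_fibQ_succ_add]
  -- `(2 : ℍ[ℝ])` is not syntactically a coerced real; `map_ofNat` makes it one.
  ext : 1 <;>
    simp [← coe_mul_eq_smul, ← map_ofNat (algebraMap ℝ ℍ[ℝ]) 2, algebraMap_def, ← coe_mul]
  ring
end
end

section
/- For n ≥ 1, the sum of odd-indexed dual Fibonacci quaternions satisfies Σ_{s=1}^{n} Q̃_{2s−1} = Q̃_{2n} − Q̃_0. -/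
open Quaternion TrivSqZeroExt DualNumber

noncomputable section

/-! For any sequence with `a (k + 2) = a k + a (k + 1)` in an additive group,
`a (2s - 1) = a (2s) - a (2s - 2)`, so the odd-indexed sum telescopes; the dual Fibonacci
quaternions satisfy this recurrence because it holds componentwise. -/

theorem sum_Icc_odd_eq_sub_of_add_two {G : Type*} [AddCommGroup G] {a : ℕ → G}
    (ha : ∀ k, a (k + 2) = a k + a (k + 1)) (n : ℕ) :
    ∑ s ∈ Finset.Icc 1 n, a (2 * s - 1) = a (2 * n) - a 0 := by
  induction n with
  | zero => simp
  | succ m ih =>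
    rw [Finset.sum_Icc_succ_top (by omega), ih, show 2 * (m + 1) = 2 * m + 2 by ring,
      show 2 * m + 2 - 1 = 2 * m + 1 by omega, ha]
    abel

lemma fibQ_add_two (n : ℕ) : fibQ (n + 2) = fibQ n + fibQ (n + 1) := by
  ext <;>
    simp only [Quaternion.re_add, Quaternion.imI_add, Quaternion.imJ_add, Quaternion.imK_add] <;>
    simp [fibQ, Nat.fib_add_two]

lemma dQ_add_two (n : ℕ) : dQ (n + 2) = dQ n + dQ (n + 1) := by
  simp only [dQ, fibQ_add_two, inl_add, add_mul]
  abel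

theorem dual_fib_sum_odd_general (n : ℕ) :
    ∑ s ∈ Finset.Icc 1 n, dQ (2*s-1) = dQ (2*n) - dQ 0 :=
  sum_Icc_odd_eq_sub_of_add_two dQ_add_two n

theorem dual_fib_sum_odd (n : ℕ) (hn : 1 ≤ n) :
    ∑ s ∈ Finset.Icc 1 n, dQ (2*s-1) = dQ (2*n) - dQ 0 :=
  dual_fib_sum_odd_general n
end
end
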